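/- Consider the system ṙ = Ar with A = [[a,b,0],[−b,a,0],[0,0,λ₃]], b > 0, a < 0, λ₃ < 0, and initial value with x₀² + y₀² > 0 and z₀ ≠ 0. Then as t → +∞: κ(t) → 0 if 2λ₃ > a; κ(t) tends to a finite positive constant if 2λ₃ = a; and κ(t) → +∞ if 2λ₃ < a. In all these cases the zero solution is asymptotically stable. -/

import Mathlib

open Matrix Real Filter

noncomputable def e3norm (a : Fin 3 → ℝ) : ℝ := Real.sqrt (∑ i, (a i) ^ 2)

/-- Curvature of a space curve `r`. -/
noncomputable def curv (r : ℝ → Fin 3 → ℝ) (t : ℝ) : ℝ :=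
  e3norm (crossProduct (deriv r t) (deriv (deriv r) t)) / (e3norm (deriv r t)) ^ 3

/-! ### Auxiliary lemmas -/

lemma aux_exp_mul_tendsto_zero {c : ℝ} (hc : c < 0) :
    Tendsto (fun t : ℝ => Real.exp (c*t)) atTop (nhds 0) :=
  Real.tendsto_exp_atBot.comp ((tendsto_const_mul_atBot_of_neg hc).2 tendsto_id)

lemma aux_sqrt_atTop : Tendsto Real.sqrt atTop atTop := by
  refine tendsto_atTop_atTop.2 fun C => ⟨C^2, fun x hx => ?_⟩
  rcases le_or_gt C 0 with h | h
  · exact h.trans (Real.sqrt_nonneg x)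
  · have h2 := Real.sqrt_le_sqrt hx
    rwa [Real.sqrt_sq h.le] at h2

lemma expc_hasDeriv' (a t : ℝ) :
    HasDerivAt (fun t : ℝ => Real.exp (a*t)) (a * Real.exp (a*t)) t := by
  simpa [mul_comm] using ((hasDerivAt_id t).const_mul a).exp

noncomputable def Xf (a b x0 y0 t : ℝ) : ℝ :=
  Real.exp (a*t) * (x0 * Real.cos (b*t) + y0 * Real.sin (b*t))
noncomputable def Yf (a b x0 y0 t : ℝ) : ℝ :=
  Real.exp (a*t) * (-x0 * Real.sin (b*t) + y0 * Real.cos (b*t))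

lemma Xf_hasDeriv (a b x0 y0 t : ℝ) :
    HasDerivAt (fun s => Xf a b x0 y0 s) (a * Xf a b x0 y0 t + b * Yf a b x0 y0 t) t := by
  have hcos : HasDerivAt (fun s : ℝ => Real.cos (b*s)) (-Real.sin (b*t) * b) t := by
    simpa [mul_comm] using ((hasDerivAt_id t).const_mul b).cos
  have hsin : HasDerivAt (fun s : ℝ => Real.sin (b*s)) (Real.cos (b*t) * b) t := by
    simpa [mul_comm] using ((hasDerivAt_id t).const_mul b).sin
  have h := (expc_hasDeriv' a t).mul ((hcos.const_mul x0).add (hsin.const_mul y0))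
  refine h.congr_deriv ?_
  unfold Xf Yf; simp only [Pi.add_apply]; ring

lemma Yf_hasDeriv (a b x0 y0 t : ℝ) :
    HasDerivAt (fun s => Yf a b x0 y0 s) (-b * Xf a b x0 y0 t + a * Yf a b x0 y0 t) t := by
  have hcos : HasDerivAt (fun s : ℝ => Real.cos (b*s)) (-Real.sin (b*t) * b) t := by
    simpa [mul_comm] using ((hasDerivAt_id t).const_mul b).cos
  have hsin : HasDerivAt (fun s : ℝ => Real.sin (b*s)) (Real.cos (b*t) * b) t := by
    simpa [mul_comm] using ((hasDerivAt_id t).const_mul b).sin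
  have h := (expc_hasDeriv' a t).mul ((hsin.const_mul (-x0)).add (hcos.const_mul y0))
  refine h.congr_deriv ?_
  unfold Xf Yf; simp only [Pi.add_apply]; ring

lemma Zf_hasDeriv (l3 z0 t : ℝ) :
    HasDerivAt (fun s : ℝ => z0 * Real.exp (l3*s)) (l3 * (z0 * Real.exp (l3*t))) t := by
  have h := (expc_hasDeriv' l3 t).const_mul z0
  refine h.congr_deriv ?_
  ring

noncomputable def uf (a b l3 x0 y0 z0 t : ℝ) : Fin 3 → ℝ :=
  ![a * Xf a b x0 y0 t + b * Yf a b x0 y0 t,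
    -b * Xf a b x0 y0 t + a * Yf a b x0 y0 t,
    l3 * (z0 * Real.exp (l3*t))]

noncomputable def wf (a b l3 x0 y0 z0 t : ℝ) : Fin 3 → ℝ :=
  ![a * (a * Xf a b x0 y0 t + b * Yf a b x0 y0 t) + b * (-b * Xf a b x0 y0 t + a * Yf a b x0 y0 t),
    -b * (a * Xf a b x0 y0 t + b * Yf a b x0 y0 t) + a * (-b * Xf a b x0 y0 t + a * Yf a b x0 y0 t),
    l3 * (l3 * (z0 * Real.exp (l3*t)))]

lemma deriv_r (a b l3 x0 y0 z0 : ℝ) (r : ℝ → Fin 3 → ℝ)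
    (hr : r = fun t =>
      ![Real.exp (a * t) * (x0 * Real.cos (b * t) + y0 * Real.sin (b * t)),
        Real.exp (a * t) * (-x0 * Real.sin (b * t) + y0 * Real.cos (b * t)),
        z0 * Real.exp (l3 * t)]) :
    deriv r = uf a b l3 x0 y0 z0 := by
  funext t
  refine HasDerivAt.deriv (hasDerivAt_pi.2 ?_)
  intro i
  subst hr
  fin_cases i
  · simpa [uf, Xf, Yf] using Xf_hasDeriv a b x0 y0 t
  · simpa [uf, Xf, Yf] using Yf_hasDeriv a b x0 y0 t
  · simpa [uf] using Zf_hasDeriv l3 z0 t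

lemma deriv_uf (a b l3 x0 y0 z0 : ℝ) :
    deriv (uf a b l3 x0 y0 z0) = wf a b l3 x0 y0 z0 := by
  funext t
  refine HasDerivAt.deriv (hasDerivAt_pi.2 ?_)
  intro i
  fin_cases i
  · have h := ((Xf_hasDeriv a b x0 y0 t).const_mul a).add ((Yf_hasDeriv a b x0 y0 t).const_mul b)
    simpa [uf, wf, Pi.add_def] using h
  · have h := ((Xf_hasDeriv a b x0 y0 t).const_mul (-b)).add ((Yf_hasDeriv a b x0 y0 t).const_mul a)
    simpa [uf, wf, Pi.add_def] using h
  · have h := (Zf_hasDeriv l3 z0 t).const_mul l3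
    simpa [uf, wf] using h

lemma XYsq (a b x0 y0 t : ℝ) :
    Xf a b x0 y0 t ^ 2 + Yf a b x0 y0 t ^ 2 = (x0^2+y0^2) * Real.exp (a*t)^2 := by
  unfold Xf Yf
  linear_combination (Real.exp (a*t))^2 * (x0^2+y0^2) * (Real.sin_sq_add_cos_sq (b*t))

lemma curv_val (a b l3 x0 y0 z0 : ℝ) (r : ℝ → Fin 3 → ℝ)
    (hr : r = fun t =>
      ![Real.exp (a * t) * (x0 * Real.cos (b * t) + y0 * Real.sin (b * t)),
        Real.exp (a * t) * (-x0 * Real.sin (b * t) + y0 * Real.cos (b * t)),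
        z0 * Real.exp (l3 * t)]) (t : ℝ) :
    curv r t =
      Real.sqrt ((a^2+b^2)*(x0^2+y0^2) * Real.exp (a*t)^2 *
        ((b^2+(a-l3)^2) * (l3^2*z0^2) * Real.exp (l3*t)^2
          + b^2 * ((a^2+b^2)*(x0^2+y0^2)) * Real.exp (a*t)^2))
      / Real.sqrt ((a^2+b^2)*(x0^2+y0^2) * Real.exp (a*t)^2
          + (l3^2*z0^2) * Real.exp (l3*t)^2) ^ 3 := by
  have hXY := XYsq a b x0 y0 t
  have h1 : (∑ i, (uf a b l3 x0 y0 z0 t i) ^ 2)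
      = (a^2+b^2)*(x0^2+y0^2) * Real.exp (a*t)^2 + (l3^2*z0^2) * Real.exp (l3*t)^2 := by
    simp only [uf, Fin.sum_univ_three, Matrix.cons_val_zero, Matrix.cons_val_one,
      Matrix.head_cons, Matrix.cons_val_two, Matrix.tail_cons]
    linear_combination (a^2+b^2) * hXY
  have h2 : (∑ i, (crossProduct (uf a b l3 x0 y0 z0 t) (wf a b l3 x0 y0 z0 t) i) ^ 2)
      = (a^2+b^2)*(x0^2+y0^2) * Real.exp (a*t)^2 *
        ((b^2+(a-l3)^2) * (l3^2*z0^2) * Real.exp (l3*t)^2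
          + b^2 * ((a^2+b^2)*(x0^2+y0^2)) * Real.exp (a*t)^2) := by
    simp only [cross_apply, uf, wf, Fin.sum_univ_three, Matrix.cons_val_zero,
      Matrix.cons_val_one, Matrix.head_cons, Matrix.cons_val_two, Matrix.tail_cons]
    linear_combination ((b^2+(a-l3)^2) * l3^2 * (a^2+b^2) * z0^2 * Real.exp (l3*t)^2
      + b^2 * (a^2+b^2)^2 * (Xf a b x0 y0 t^2 + Yf a b x0 y0 t^2
          + (x0^2+y0^2) * Real.exp (a*t)^2)) * hXY
  rw [curv, deriv_r a b l3 x0 y0 z0 r hr, deriv_uf, e3norm, e3norm, h1, h2]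

/-! ### The matrix exponential -/

section MatPart
attribute [local instance] Matrix.linftyOpNormedRing Matrix.linftyOpNormedAlgebra

open NormedSpace in
noncomputable def Mm (a b l3 t : ℝ) : Matrix (Fin 3) (Fin 3) ℝ :=
  (Real.exp (a*t) * Real.cos (b*t)) • !![(1:ℝ),0,0;0,1,0;0,0,0]
  + (Real.exp (a*t) * Real.sin (b*t)) • !![(0:ℝ),1,0;-1,0,0;0,0,0]
  + Real.exp (l3*t) • !![(0:ℝ),0,0;0,0,0;0,0,1]

lemma expcos_hasDeriv (a b t : ℝ) :
    HasDerivAt (fun t => Real.exp (a*t) * Real.cos (b*t))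
      (a * (Real.exp (a*t) * Real.cos (b*t)) - b * (Real.exp (a*t) * Real.sin (b*t))) t := by
  have hcos : HasDerivAt (fun s : ℝ => Real.cos (b*s)) (-Real.sin (b*t) * b) t := by
    simpa [mul_comm] using ((hasDerivAt_id t).const_mul b).cos
  have h := (expc_hasDeriv' a t).mul hcos
  refine h.congr_deriv ?_
  ring

lemma expsin_hasDeriv (a b t : ℝ) :
    HasDerivAt (fun t => Real.exp (a*t) * Real.sin (b*t))
      (b * (Real.exp (a*t) * Real.cos (b*t)) + a * (Real.exp (a*t) * Real.sin (b*t))) t := by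
  have hsin : HasDerivAt (fun s : ℝ => Real.sin (b*s)) (Real.cos (b*t) * b) t := by
    simpa [mul_comm] using ((hasDerivAt_id t).const_mul b).sin
  have h := (expc_hasDeriv' a t).mul hsin
  refine h.congr_deriv ?_
  ring

lemma Mm_hasDeriv (a b l3 t : ℝ) :
    HasDerivAt (Mm a b l3) (!![a, b, 0; -b, a, 0; 0, 0, l3] * Mm a b l3 t) t := by
  have h := (((expcos_hasDeriv a b t).smul_const !![(1:ℝ),0,0;0,1,0;0,0,0]).add
      ((expsin_hasDeriv a b t).smul_const !![(0:ℝ),1,0;-1,0,0;0,0,0])).add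
      ((expc_hasDeriv' l3 t).smul_const !![(0:ℝ),0,0;0,0,0;0,0,1])
  refine h.congr_deriv ?_
  ext i j
  fin_cases i <;> fin_cases j <;>
    simp [Mm, Matrix.mul_apply, Fin.sum_univ_three, Matrix.vecHead, Matrix.vecTail] <;> ring

lemma Mm_zero (a b l3 : ℝ) : Mm a b l3 0 = 1 := by
  ext i j
  fin_cases i <;> fin_cases j <;>
    simp [Mm, Matrix.one_apply, Matrix.vecHead, Matrix.vecTail]

open NormedSpace in
lemma exp_eq_Mm (a b l3 t : ℝ) :
    NormedSpace.exp (t • !![a, b, 0; -b, a, 0; 0, 0, l3]) = Mm a b l3 t := by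
  set A : Matrix (Fin 3) (Fin 3) ℝ := !![a, b, 0; -b, a, 0; 0, 0, l3] with hA
  have key : ∀ s : ℝ, NormedSpace.exp (s • (-A)) * Mm a b l3 s = 1 := by
    have hd : ∀ s : ℝ, HasDerivAt (fun u : ℝ => NormedSpace.exp (u • (-A)) * Mm a b l3 u) 0 s := by
      intro s
      have h1 : HasDerivAt (fun u : ℝ => NormedSpace.exp (u • (-A))) ((-A) * NormedSpace.exp (s • (-A))) s :=
        hasDerivAt_exp_smul_const' (-A) s
      have h2 : HasDerivAt (Mm a b l3) (A * Mm a b l3 s) s := by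
        rw [hA]; exact Mm_hasDeriv a b l3 s
      have h3 := h1.mul h2
      have hc : (-A) * NormedSpace.exp (s • (-A)) = NormedSpace.exp (s • (-A)) * (-A) :=
        (((Commute.refl (-A)).smul_right s).exp_right).eq
      have h4 : (-A) * NormedSpace.exp (s • (-A)) * Mm a b l3 s
          + NormedSpace.exp (s • (-A)) * (A * Mm a b l3 s) = 0 := by
        rw [hc, mul_assoc, ← mul_add, neg_mul, neg_add_cancel, mul_zero]
      rw [← h4]
      exact h3
    have hconst : ∀ s : ℝ, (fun u : ℝ => NormedSpace.exp (u • (-A)) * Mm a b l3 u) s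
        = (fun u : ℝ => NormedSpace.exp (u • (-A)) * Mm a b l3 u) 0 := fun s =>
      is_const_of_deriv_eq_zero (fun u => (hd u).differentiableAt)
        (fun u => (hd u).deriv) s 0
    intro s
    simpa [Mm_zero, NormedSpace.exp_zero] using hconst s
  have h2 : NormedSpace.exp (t • A) * NormedSpace.exp (t • (-A)) = 1 := by
    rw [smul_neg, ← Matrix.exp_add_of_commute _ _ (Commute.refl (t • A)).neg_right]
    simp [NormedSpace.exp_zero]
  calc NormedSpace.exp (t • A) = NormedSpace.exp (t • A) * (NormedSpace.exp (t • (-A)) * Mm a b l3 t) := by rw [key t]; simp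
    _ = (NormedSpace.exp (t • A) * NormedSpace.exp (t • (-A))) * Mm a b l3 t := by rw [mul_assoc]
    _ = Mm a b l3 t := by rw [h2, one_mul]

end MatPart

lemma Mm_mulVec_tendsto {a b l3 : ℝ} (ha : a < 0) (hl3 : l3 < 0) (r0 : Fin 3 → ℝ) :
    Tendsto (fun t => Mm a b l3 t *ᵥ r0) atTop (nhds 0) := by
  have heq : ∀ t, Mm a b l3 t *ᵥ r0 =
      (Real.exp (a*t) * Real.cos (b*t)) • (!![(1:ℝ),0,0;0,1,0;0,0,0] *ᵥ r0)
      + (Real.exp (a*t) * Real.sin (b*t)) • (!![(0:ℝ),1,0;-1,0,0;0,0,0] *ᵥ r0)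
      + Real.exp (l3*t) • (!![(0:ℝ),0,0;0,0,0;0,0,1] *ᵥ r0) := by
    intro t
    simp [Mm, Matrix.add_mulVec, Matrix.smul_mulVec]
    ring
  simp only [heq]
  have hE := aux_exp_mul_tendsto_zero ha
  have hcos : Tendsto (fun t : ℝ => Real.exp (a*t) * Real.cos (b*t)) atTop (nhds 0) := by
    apply squeeze_zero_norm ?_ hE
    intro t
    rw [Real.norm_eq_abs, abs_mul, Real.abs_exp]
    nlinarith [Real.abs_cos_le_one (b*t), Real.exp_pos (a*t), abs_nonneg (Real.cos (b*t))]
  have hsin : Tendsto (fun t : ℝ => Real.exp (a*t) * Real.sin (b*t)) atTop (nhds 0) := by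
    apply squeeze_zero_norm ?_ hE
    intro t
    rw [Real.norm_eq_abs, abs_mul, Real.abs_exp]
    nlinarith [Real.abs_sin_le_one (b*t), Real.exp_pos (a*t), abs_nonneg (Real.sin (b*t))]
  have h1 := hcos.smul_const (!![(1:ℝ),0,0;0,1,0;0,0,0] *ᵥ r0)
  have h2 := hsin.smul_const (!![(0:ℝ),1,0;-1,0,0;0,0,0] *ᵥ r0)
  have h3 := (aux_exp_mul_tendsto_zero hl3).smul_const (!![(0:ℝ),0,0;0,0,0;0,0,1] *ᵥ r0)
  simpa using (h1.add h2).add h3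


lemma sqrt_cube {x : ℝ} (hx : 0 ≤ x) : Real.sqrt (x^3) = Real.sqrt x ^ 3 := by
  rw [pow_succ, Real.sqrt_mul (by positivity), Real.sqrt_sq hx, pow_succ, Real.sq_sqrt hx]

lemma case1_bound (b cc P Q E F : ℝ) (hP : 0 < P) (hQ : 0 < Q)
    (hE : 0 < E) (hF : 0 < F) (hbcc : b^2 ≤ cc) :
    (P*E^2*(cc*Q*F^2 + b^2*P*E^2)) / (P*E^2+Q*F^2)^3 ≤ (cc*P/Q^2) * (E/F^2)^2 := by
  have hD : 0 < P*E^2+Q*F^2 := by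
    have := mul_pos hP (pow_pos hE 2)
    have := mul_pos hQ (pow_pos hF 2)
    linarith
  have hRD : (cc*P/Q^2) * (E/F^2)^2 = (cc*P*E^2) / (Q*F^2)^2 := by
    rw [div_pow, div_mul_div_comm, mul_pow]
  rw [hRD, div_le_div_iff₀ (pow_pos hD 3) (pow_pos (mul_pos hQ (pow_pos hF 2)) 2)]
  have hN : P*E^2*(cc*Q*F^2 + b^2*P*E^2) ≤ cc*P*E^2 * (P*E^2+Q*F^2) := by
    nlinarith [mul_nonneg (sq_nonneg (P*E^2)) (sub_nonneg.2 hbcc)]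
  have hDD : (Q*F^2)^2 ≤ (P*E^2+Q*F^2)^2 := by
    nlinarith [sq_nonneg (P*E^2), mul_pos (mul_pos hP (pow_pos hE 2)) (mul_pos hQ (pow_pos hF 2))]
  calc P*E^2*(cc*Q*F^2 + b^2*P*E^2) * (Q*F^2)^2
      ≤ (cc*P*E^2 * (P*E^2+Q*F^2)) * (P*E^2+Q*F^2)^2 := by
        apply mul_le_mul hN hDD (by positivity) ?_
        have h1 : 0 ≤ cc := le_trans (sq_nonneg b) hbcc
        positivity
    _ = cc*P*E^2 * (P*E^2+Q*F^2)^3 := by ring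

lemma case3_bound (b cc P Q E F : ℝ) (hP : 0 < P) (hQ : 0 < Q)
    (hE : 0 < E) (hF : 0 < F) (hbcc : b^2 ≤ cc) :
    b^2*P * (2*(P^2*E^2 + Q^2*(F^4/E^2)))⁻¹
      ≤ (P*E^2*(cc*Q*F^2 + b^2*P*E^2)) / (P*E^2+Q*F^2)^3 := by
  have hD : 0 < P*E^2+Q*F^2 := by
    have := mul_pos hP (pow_pos hE 2)
    have := mul_pos hQ (pow_pos hF 2)
    linarith
  have hG : 0 < 2*(P^2*E^2 + Q^2*(F^4/E^2)) := by
    have h1 := mul_pos (pow_pos hP 2) (pow_pos hE 2)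
    have h2 : 0 ≤ Q^2*(F^4/E^2) := by positivity
    linarith
  rw [← div_eq_mul_inv, div_le_div_iff₀ hG (pow_pos hD 3)]
  have hGE : (2*(P^2*E^2 + Q^2*(F^4/E^2))) * E^2 = 2*(P^2*E^4+Q^2*F^4) := by
    field_simp
  have hN : b^2*P*E^2*(P*E^2+Q*F^2) ≤ P*E^2*(cc*Q*F^2 + b^2*P*E^2) := by
    nlinarith [mul_nonneg (mul_nonneg (mul_nonneg (mul_nonneg hP.le (sq_nonneg E)) hQ.le)
      (sq_nonneg F)) (sub_nonneg.2 hbcc)]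
  have hDD : (P*E^2+Q*F^2)^2 ≤ 2*(P^2*E^4+Q^2*F^4) := by
    nlinarith [sq_nonneg (P*E^2 - Q*F^2)]
  have hNn : 0 ≤ P*E^2*(cc*Q*F^2 + b^2*P*E^2) := by
    have h1 : 0 ≤ cc := le_trans (sq_nonneg b) hbcc
    positivity
  have key : (b^2*P*E^2*(P*E^2+Q*F^2)) * (P*E^2+Q*F^2)^2
      ≤ (P*E^2*(cc*Q*F^2 + b^2*P*E^2)) * (2*(P^2*E^4+Q^2*F^4)) :=
    mul_le_mul hN hDD (sq_nonneg _) hNn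
  rw [← hGE] at key
  refine le_of_mul_le_mul_right ?_ (pow_pos hE 2)
  calc b^2*P * (P*E^2+Q*F^2)^3 * E^2
      = (b^2*P*E^2*(P*E^2+Q*F^2)) * (P*E^2+Q*F^2)^2 := by ring
    _ ≤ P*E^2*(cc*Q*F^2 + b^2*P*E^2) * (2*(P^2*E^2 + Q^2*(F^4/E^2)) * E^2) := key
    _ = P*E^2*(cc*Q*F^2 + b^2*P*E^2) * (2*(P^2*E^2 + Q^2*(F^4/E^2))) * E^2 := by ring

lemma case2_eq (b cc P Q u : ℝ) (hP : 0 < P) (hQ : 0 < Q) (hcc : 0 < cc) (hu : 0 < u) :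
    Real.sqrt (P*u^2*(cc*Q*u + b^2*P*u^2)) / Real.sqrt (P*u^2 + Q*u)^3
      = Real.sqrt (P*(cc*Q + b^2*P*u)) / Real.sqrt (P*u+Q)^3 := by
  have hs2 : Real.sqrt u ^ 2 = u := Real.sq_sqrt hu.le
  have hspos : 0 < Real.sqrt u := Real.sqrt_pos.2 hu
  have hnum : Real.sqrt (P*u^2*(cc*Q*u + b^2*P*u^2))
      = Real.sqrt u ^3 * Real.sqrt (P*(cc*Q + b^2*P*u)) := by
    rw [show P*u^2*(cc*Q*u + b^2*P*u^2) = (Real.sqrt u^3)^2 * (P*(cc*Q + b^2*P*u)) from by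
      linear_combination (-(P*cc*Q + b^2*P^2*u) * (Real.sqrt u^4 + Real.sqrt u^2*u + u^2)) * hs2]
    rw [Real.sqrt_mul (by positivity), Real.sqrt_sq (by positivity)]
  have hden : Real.sqrt (P*u^2 + Q*u) = Real.sqrt u * Real.sqrt (P*u+Q) := by
    rw [show P*u^2 + Q*u = Real.sqrt u^2 * (P*u+Q) from by
      linear_combination (-(P*u+Q)) * hs2]
    rw [Real.sqrt_mul (by positivity), Real.sqrt_sq hspos.le]
  rw [hnum, hden, mul_pow, mul_div_mul_left _ _ (by positivity : Real.sqrt u^3 ≠ 0)]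

/-! ### Main theorem -/

theorem curvature_limit_rotation_block_stable
    (a b l3 x0 y0 z0 : ℝ) (hb : 0 < b) (ha : a < 0) (hl3 : l3 < 0)
    (hxy : 0 < x0 ^ 2 + y0 ^ 2) (hz : z0 ≠ 0)
    (A : Matrix (Fin 3) (Fin 3) ℝ) (hA : A = !![a, b, 0; -b, a, 0; 0, 0, l3])
    (r : ℝ → Fin 3 → ℝ)
    (hr : r = fun t =>
      ![Real.exp (a * t) * (x0 * Real.cos (b * t) + y0 * Real.sin (b * t)),
        Real.exp (a * t) * (-x0 * Real.sin (b * t) + y0 * Real.cos (b * t)),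
        z0 * Real.exp (l3 * t)]) :
    ((2 * l3 > a → Tendsto (curv r) atTop (nhds 0)) ∧
      (2 * l3 = a → ∃ C : ℝ, 0 < C ∧ Tendsto (curv r) atTop (nhds C)) ∧
      (2 * l3 < a → Tendsto (curv r) atTop atTop)) ∧
      ∀ r0 : Fin 3 → ℝ,
        Tendsto (fun t : ℝ => NormedSpace.exp (t • A) *ᵥ r0) atTop (nhds 0) := by
  have hcurv := curv_val a b l3 x0 y0 z0 r hr
  obtain ⟨P, hPdef⟩ : ∃ P : ℝ, P = (a^2+b^2)*(x0^2+y0^2) := ⟨_, rfl⟩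
  obtain ⟨Q, hQdef⟩ : ∃ Q : ℝ, Q = l3^2*z0^2 := ⟨_, rfl⟩
  obtain ⟨cc, hccdef⟩ : ∃ cc : ℝ, cc = b^2+(a-l3)^2 := ⟨_, rfl⟩
  have hP : 0 < P := by
    rw [hPdef]
    have h1 : 0 < a^2+b^2 := by positivity
    exact mul_pos h1 hxy
  have hQ : 0 < Q := by
    rw [hQdef]
    have h1 : l3 ≠ 0 := ne_of_lt hl3
    positivity
  have hcc : 0 < cc := by rw [hccdef]; positivity
  have hbcc : b^2 ≤ cc := by rw [hccdef]; nlinarith [sq_nonneg (a-l3)]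
  simp only [← hPdef, ← hQdef, ← hccdef] at hcurv
  have hDpos : ∀ t : ℝ, 0 < P * Real.exp (a*t)^2 + Q * Real.exp (l3*t)^2 := by
    intro t
    have h1 := mul_pos hP (pow_pos (Real.exp_pos (a*t)) 2)
    have h2 := mul_pos hQ (pow_pos (Real.exp_pos (l3*t)) 2)
    linarith
  have hNnonneg : ∀ t : ℝ, 0 ≤ P * Real.exp (a*t)^2 *
      (cc * Q * Real.exp (l3*t)^2 + b^2 * P * Real.exp (a*t)^2) := by
    intro t
    have h1 : 0 ≤ cc * Q * Real.exp (l3*t)^2 :=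
      mul_nonneg (mul_nonneg hcc.le hQ.le) (sq_nonneg _)
    have h2 : 0 ≤ b^2 * P * Real.exp (a*t)^2 :=
      mul_nonneg (mul_nonneg (sq_nonneg b) hP.le) (sq_nonneg _)
    have h3 : 0 ≤ P * Real.exp (a*t)^2 := mul_nonneg hP.le (sq_nonneg _)
    nlinarith
  have hcurv2 : ∀ t, curv r t =
      Real.sqrt ((P * Real.exp (a*t)^2 *
        (cc * Q * Real.exp (l3*t)^2 + b^2 * P * Real.exp (a*t)^2))
        / (P * Real.exp (a*t)^2 + Q * Real.exp (l3*t)^2) ^ 3) := by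
    intro t
    rw [hcurv t, ← sqrt_cube (hDpos t).le, ← Real.sqrt_div (hNnonneg t)]
  have hcurv_nonneg : ∀ t, 0 ≤ curv r t := by
    intro t; rw [hcurv2 t]; exact Real.sqrt_nonneg _
  constructor
  · refine ⟨?_, ?_, ?_⟩
    · -- case 2*l3 > a : curvature tends to 0
      intro hgt
      have key : ∀ t, curv r t ≤ Real.sqrt (cc*P/Q^2) * Real.exp ((a-2*l3)*t) := by
        intro t
        rw [hcurv2 t]
        have hEF : Real.exp ((a-2*l3)*t) = Real.exp (a*t) / Real.exp (l3*t)^2 := by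
          rw [show (a-2*l3)*t = a*t - (l3*t + l3*t) by ring, Real.exp_sub, Real.exp_add, sq]
        have hb1 := case1_bound b cc P Q (Real.exp (a*t)) (Real.exp (l3*t)) hP hQ
          (Real.exp_pos _) (Real.exp_pos _) hbcc
        calc Real.sqrt ((P * Real.exp (a*t)^2 *
              (cc * Q * Real.exp (l3*t)^2 + b^2 * P * Real.exp (a*t)^2))
              / (P * Real.exp (a*t)^2 + Q * Real.exp (l3*t)^2) ^ 3)
            ≤ Real.sqrt ((cc*P/Q^2) * (Real.exp (a*t)/Real.exp (l3*t)^2)^2) :=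
              Real.sqrt_le_sqrt hb1
          _ = Real.sqrt (cc*P/Q^2) * Real.sqrt ((Real.exp (a*t)/Real.exp (l3*t)^2)^2) :=
              Real.sqrt_mul (div_nonneg (mul_nonneg hcc.le hP.le) (sq_nonneg Q)) _
          _ = Real.sqrt (cc*P/Q^2) * (Real.exp (a*t)/Real.exp (l3*t)^2) := by
              rw [Real.sqrt_sq (by positivity)]
          _ = Real.sqrt (cc*P/Q^2) * Real.exp ((a-2*l3)*t) := by rw [hEF]
      have hupper : Tendsto (fun t => Real.sqrt (cc*P/Q^2) * Real.exp ((a-2*l3)*t))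
          atTop (nhds 0) := by
        have h := (aux_exp_mul_tendsto_zero (by linarith : a-2*l3 < 0)).const_mul
          (Real.sqrt (cc*P/Q^2))
        simpa using h
      exact tendsto_of_tendsto_of_tendsto_of_le_of_le tendsto_const_nhds hupper
        hcurv_nonneg key
    · -- case 2*l3 = a : constant positive limit
      intro heq2
      refine ⟨Real.sqrt (P*(cc*Q)) / Real.sqrt Q ^ 3,
        div_pos (Real.sqrt_pos.2 (mul_pos hP (mul_pos hcc hQ)))
          (pow_pos (Real.sqrt_pos.2 hQ) 3), ?_⟩
      have key : ∀ t, curv r t =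
          Real.sqrt (P*(cc*Q + b^2*P*Real.exp (2*l3*t)))
            / Real.sqrt (P*Real.exp (2*l3*t) + Q) ^ 3 := by
        intro t
        rw [hcurv t, ← heq2]
        have hF2 : Real.exp (l3*t)^2 = Real.exp (2*l3*t) := by
          rw [sq, ← Real.exp_add]; congr 1; ring
        rw [hF2]
        exact case2_eq b cc P Q (Real.exp (2*l3*t)) hP hQ hcc (Real.exp_pos _)
      refine Tendsto.congr (fun t => (key t).symm) ?_
      have hu0 : Tendsto (fun t => Real.exp (2*l3*t)) atTop (nhds 0) :=
        aux_exp_mul_tendsto_zero (by linarith)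
      have hnum : Tendsto (fun t => Real.sqrt (P*(cc*Q + b^2*P*Real.exp (2*l3*t))))
          atTop (nhds (Real.sqrt (P*(cc*Q)))) := by
        have h0 : Tendsto (fun t => P*(cc*Q + b^2*P*Real.exp (2*l3*t))) atTop
            (nhds (P*(cc*Q + b^2*P*0))) :=
          ((hu0.const_mul (b^2*P)).const_add (cc*Q)).const_mul P
        have h1 := (Real.continuous_sqrt.tendsto _).comp h0
        simpa [Function.comp_def] using h1
      have hden : Tendsto (fun t => Real.sqrt (P*Real.exp (2*l3*t) + Q) ^ 3)
          atTop (nhds (Real.sqrt Q ^ 3)) := by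
        have h0 : Tendsto (fun t => P*Real.exp (2*l3*t) + Q) atTop (nhds (P*0 + Q)) :=
          (hu0.const_mul P).add_const Q
        have h1 := ((Real.continuous_sqrt.tendsto _).comp h0).pow 3
        simpa using h1
      exact hnum.div hden (ne_of_gt (pow_pos (Real.sqrt_pos.2 hQ) 3))
    · -- case 2*l3 < a : curvature tends to infinity
      intro hlt
      have key : ∀ t, Real.sqrt (b^2*P * (2*(P^2*Real.exp (2*a*t)
          + Q^2*Real.exp ((4*l3-2*a)*t)))⁻¹) ≤ curv r t := by
        intro t
        rw [hcurv2 t]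
        apply Real.sqrt_le_sqrt
        have h1 : Real.exp (2*a*t) = Real.exp (a*t)^2 := by
          rw [sq, ← Real.exp_add]; congr 1; ring
        have h2 : Real.exp ((4*l3-2*a)*t) = Real.exp (l3*t)^4 / Real.exp (a*t)^2 := by
          rw [show (4*l3-2*a)*t = (l3*t + l3*t + (l3*t + l3*t)) - (a*t + a*t) by ring,
            Real.exp_sub, Real.exp_add, Real.exp_add, Real.exp_add]
          ring
        rw [h1, h2]
        exact case3_bound b cc P Q (Real.exp (a*t)) (Real.exp (l3*t)) hP hQ
          (Real.exp_pos _) (Real.exp_pos _) hbcc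
      have hlow : Tendsto (fun t => Real.sqrt (b^2*P * (2*(P^2*Real.exp (2*a*t)
          + Q^2*Real.exp ((4*l3-2*a)*t)))⁻¹)) atTop atTop := by
        apply aux_sqrt_atTop.comp
        apply Tendsto.const_mul_atTop (mul_pos (pow_pos hb 2) hP)
        have hbase : Tendsto (fun t => 2*(P^2*Real.exp (2*a*t)
            + Q^2*Real.exp ((4*l3-2*a)*t))) atTop (nhds 0) := by
          have h1 := (aux_exp_mul_tendsto_zero (by linarith : 2*a < 0)).const_mul (P^2)
          have h2 := (aux_exp_mul_tendsto_zero (by linarith : 4*l3-2*a < 0)).const_mul (Q^2)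
          have h3 := (h1.add h2).const_mul (2:ℝ)
          simpa using h3
        have hbase' : Tendsto (fun t => 2*(P^2*Real.exp (2*a*t)
            + Q^2*Real.exp ((4*l3-2*a)*t))) atTop (nhdsWithin 0 (Set.Ioi 0)) := by
          apply tendsto_nhdsWithin_of_tendsto_nhds_of_eventually_within _ hbase
          refine Eventually.of_forall fun t => ?_
          have h1 := mul_pos (pow_pos hP 2) (Real.exp_pos (2*a*t))
          have h2 := mul_pos (pow_pos hQ 2) (Real.exp_pos ((4*l3-2*a)*t))
          have : (0:ℝ) < P^2*Real.exp (2*a*t) + Q^2*Real.exp ((4*l3-2*a)*t) := by linarith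
          simpa [Set.mem_Ioi] using by linarith
        exact hbase'.inv_tendsto_nhdsGT_zero
      exact tendsto_atTop_mono key hlow
  · -- asymptotic stability
    intro r0
    subst hA
    simp only [exp_eq_Mm]
    exact Mm_mulVec_tendsto ha hl3 r0
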